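/- If the approximations V_t satisfy the exact dynamic programming equations, i.e., V_t(y,x) = sup_{h ∈ K_t(y,x)} { H_t(h,x) + E[V_{t+1}(y-h, X_{t+1}) | X_t = x] } for t < T and V_T(y,x) = sup_{h ∈ K_T(y,x)} H_T(h,x), then for every admissible policy and every s, the summand H_s(h_s, X_s) + E_s[V_{s+1}(y_{s+1}, X_{s+1})] - V_s(y_s, X_s) is almost surely nonpositive, and hence the dual upper estimate built from V equals V exactly: V^↑_t(y,x) = V_t(y,x) = V^{K,*}_t(y,x). -/

import Mathlib

/-!
The space is finite, so an almost sure statement is a statement at every atom `ω`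
(`μ {ω} ≠ 0`). At an atom, the exact Bellman equation gives for every admissible exercise `h`
the one-step inequality `H_s(h, X_s) + E_s[V_{s+1}(y - h, X_{s+1})] ≤ V_s(y, X_s)`, with
equality for a maximiser. Telescoping the dual summands bounds the pathwise dual functional by
`V_0(y, X_0)`, and the greedy policy built from maximisers attains the bound, so the supremum
inside the dual estimate is a.s. `V_0(y, X_0)`. The same telescoping writes the total reward of
an adapted policy as its dual functional plus increments of the Doob martingale of `V`, whose
conditional expectations vanish because an `ℱ_s`-measurable control can be frozen inside `E_s`.
Hence every policy value is at most `V_0(y, X_0)`, with equality for the greedy policy.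
-/

open MeasureTheory Finset

section Setup

variable {Ω : Type*}

/-- Control value at time `t`, starting from `y0` at time `t0`:
`y_t = y0 - ∑_{t0 ≤ s < t} h_s`. -/
noncomputable def ctrl {E : Type*} [AddCommGroup E] (y0 : E) (h : ℕ → Ω → E)
    (t0 t : ℕ) (ω : Ω) : E :=
  y0 - ∑ s ∈ Finset.Ico t0 t, h s ω

/-- A `K`-admissible exercise policy on `{t0, …, T}` started at `y0`:
each `h_s` is `ℱ s`-measurable and a.s. `h_s(ω) ∈ K_s(y_s, X_s(ω))`. -/
def Admissible {E S : Type*} [AddCommGroup E] [MeasurableSpace E]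
    {m0 : MeasurableSpace Ω} (μ : Measure Ω) (ℱ : Filtration ℕ m0) (T : ℕ)
    (K : ℕ → E → S → Set E) (X : ℕ → Ω → S) (t0 : ℕ) (y0 : E)
    (h : ℕ → Ω → E) : Prop :=
  (∀ s, Measurable[ℱ s] (h s)) ∧
  (∀ᵐ ω ∂μ, ∀ s, t0 ≤ s → s ≤ T → h s ω ∈ K s (ctrl y0 h t0 s ω) (X s ω))

/-- The value of a policy at time `t0`:
`V^π_{t0} = E[∑_{s=t0}^T H_s(h_s, X_s) | ℱ_{t0}]`. -/
noncomputable def polValue {E S : Type*}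
    {m0 : MeasurableSpace Ω} (μ : Measure Ω) (ℱ : Filtration ℕ m0) (T : ℕ)
    (H : ℕ → E → S → ℝ) (X : ℕ → Ω → S) (t0 : ℕ)
    (h : ℕ → Ω → E) : Ω → ℝ :=
  μ[fun ω => ∑ s ∈ Finset.Icc t0 T, H s (h s ω) (X s ω) | ℱ t0]

/-- The value function `V^{K,*}_{t0}(y0)` as the supremum of policy values over
the `K`-admissible policies started at `y0` at time `t0`. -/
noncomputable def valueFn {E S : Type*} [AddCommGroup E] [MeasurableSpace E]
    {m0 : MeasurableSpace Ω} (μ : Measure Ω) (ℱ : Filtration ℕ m0) (T : ℕ)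
    (H : ℕ → E → S → ℝ) (K : ℕ → E → S → Set E) (X : ℕ → Ω → S)
    (t0 : ℕ) (y0 : E) : Ω → ℝ :=
  fun ω => ⨆ π : {h : ℕ → Ω → E // Admissible μ ℱ T K X t0 y0 h},
    polValue μ ℱ T H X t0 π.1 ω

end Setup

section Dual

variable {Ω : Type*}

/-- One-step conditional expectation of an approximation family:
`condV μ ℱ V X s y' = E[V_{s+1}(y', X_{s+1}) | ℱ s]`. -/
noncomputable def condV {m0 : MeasurableSpace Ω} (μ : Measure Ω)
    (ℱ : Filtration ℕ m0) {l d : ℕ}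
    (V : ℕ → (Fin l → ℝ) → (Fin d → ℝ) → ℝ) (X : ℕ → Ω → (Fin d → ℝ))
    (s : ℕ) (y' : Fin l → ℝ) : Ω → ℝ :=
  μ[fun ω => V (s + 1) y' (X (s + 1) ω) | ℱ s]

/-- The dual upper estimate `V^↑_t(y)` built from the approximation family `V`
via its Doob-decomposition martingale increments
`M^{y}_{s+1} - M^{y}_s = V_{s+1}(y, X_{s+1}) - E_s[V_{s+1}(y, X_{s+1})]`. -/
noncomputable def dualEstimate {m0 : MeasurableSpace Ω} (μ : Measure Ω)
    (ℱ : Filtration ℕ m0) {l d : ℕ} (T : ℕ)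
    (H : ℕ → (Fin l → ℝ) → (Fin d → ℝ) → ℝ)
    (K : ℕ → (Fin l → ℝ) → (Fin d → ℝ) → Set (Fin l → ℝ))
    (V : ℕ → (Fin l → ℝ) → (Fin d → ℝ) → ℝ) (X : ℕ → Ω → (Fin d → ℝ))
    (t : ℕ) (y : Fin l → ℝ) : Ω → ℝ :=
  μ[fun ω => ⨆ π : {h : ℕ → Ω → (Fin l → ℝ) // Admissible μ ℱ T K X t y h},
      ((∑ s ∈ Finset.Ico t T,
          (H s (π.1 s ω) (X s ω)
            - V (s + 1) (ctrl y π.1 t (s + 1) ω) (X (s + 1) ω)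
            + condV μ ℱ V X s (ctrl y π.1 t (s + 1) ω) ω))
        + H T (π.1 T ω) (X T ω)) | ℱ t]

end Dual

section FiniteSpace

variable {Ω α : Type*} [Fintype Ω]

theorem Measurable.comp_of_finite {m : MeasurableSpace Ω} [MeasurableSpace α]
    [MeasurableSingletonClass α] {β : Type*} [MeasurableSpace β] {F : Ω → α}
    (hF : Measurable[m] F) (g : α → β) : Measurable[m] (g ∘ F) := by
  intro s _
  rw [Set.preimage_comp, ← Set.preimage_inter_range]
  exact hF (((Set.finite_range F).inter_of_right _).measurableSet)

theorem comp_apply_eq_sum_indicator [DecidableEq α] {β : Type*} [AddCommMonoid β] (Y : Ω → α)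
    (g : α → Ω → β) :
    (fun ω => g (Y ω) ω) = ∑ v ∈ univ.image Y, (Y ⁻¹' {v}).indicator (g v) := by
  funext ω
  rw [Finset.sum_apply, Finset.sum_eq_single_of_mem (Y ω) (mem_image_of_mem Y (mem_univ ω))]
  · simp
  · intro v _ hv
    exact Set.indicator_of_notMem (fun h => hv h.symm) _

theorem stronglyMeasurable_comp_apply {m : MeasurableSpace Ω} [MeasurableSpace α]
    [MeasurableSingletonClass α] {β : Type*} [AddCommMonoid β] [TopologicalSpace β]
    [ContinuousAdd β] {Y : Ω → α} (hY : Measurable[m] Y) {g : α → Ω → β}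
    (hg : ∀ v, StronglyMeasurable[m] (g v)) :
    StronglyMeasurable[m] (fun ω => g (Y ω) ω) := by
  classical
  rw [comp_apply_eq_sum_indicator]
  exact Finset.stronglyMeasurable_sum _ fun v _ =>
    (hg v).indicator (hY (measurableSet_singleton v))

theorem Measurable.integrable_of_finite {m0 : MeasurableSpace Ω} {μ : Measure Ω}
    [IsFiniteMeasure μ] {f : Ω → ℝ} (hf : Measurable f) : Integrable f μ :=
  .of_bound hf.aestronglyMeasurable (∑ ω, |f ω|) <| ae_of_all _ fun ω =>
    single_le_sum (f := fun ω => |f ω|) (fun _ _ => abs_nonneg _) (mem_univ ω)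

variable {m m0 : MeasurableSpace Ω} {μ : Measure Ω} [MeasurableSpace α]
  [MeasurableSingletonClass α]

theorem condExp_comp_apply_ae_eq (hm : m ≤ m0) {Y : Ω → α} (hY : Measurable[m] Y)
    {g : α → Ω → ℝ} (hg : ∀ v, Integrable (g v) μ) :
    μ[fun ω => g (Y ω) ω | m] =ᵐ[μ] fun ω => μ[g (Y ω) | m] ω := by
  classical
  rw [comp_apply_eq_sum_indicator Y g, comp_apply_eq_sum_indicator Y fun v => μ[g v | m]]
  have hfiber : ∀ v, MeasurableSet[m] (Y ⁻¹' {v}) := fun v => hY (measurableSet_singleton v)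
  exact (condExp_finsetSum (fun v _ => (hg v).indicator (hm _ (hfiber v))) m).trans
    (eventuallyEq_sum fun v _ => condExp_indicator (hg v) (hfiber v))

theorem condExp_comp_apply_sub_condExp_ae_eq_zero [IsFiniteMeasure μ] (hm : m ≤ m0)
    {Y : Ω → α} (hY : Measurable[m] Y) {g : α → Ω → ℝ} (hg : ∀ v, Measurable (g v)) :
    μ[fun ω => g (Y ω) ω - μ[g (Y ω) | m] ω | m] =ᵐ[μ] 0 := by
  have hfrozen : StronglyMeasurable[m] fun ω => μ[g (Y ω) | m] ω :=
    stronglyMeasurable_comp_apply hY fun v => stronglyMeasurable_condExp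
  have hgY : Measurable fun ω => g (Y ω) ω :=
    (stronglyMeasurable_comp_apply (hY.mono hm le_rfl) fun v =>
      (hg v).stronglyMeasurable).measurable
  have hfrozen_int : Integrable (fun ω => μ[g (Y ω) | m] ω) μ :=
    (hfrozen.mono hm).measurable.integrable_of_finite
  filter_upwards [condExp_sub hgY.integrable_of_finite hfrozen_int m,
    condExp_comp_apply_ae_eq hm hY fun v => (hg v).integrable_of_finite] with ω hsub hfreeze
  refine hsub.trans ?_
  rw [Pi.sub_apply, hfreeze, condExp_of_stronglyMeasurable hm hfrozen hfrozen_int, sub_self,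
    Pi.zero_apply]

theorem condExp_comp_of_measurable [IsFiniteMeasure μ] (hm : m ≤ m0) {F : Ω → α}
    (hF : Measurable[m] F) (g : α → ℝ) : μ[g ∘ F | m] = g ∘ F :=
  condExp_of_stronglyMeasurable hm (hF.comp_of_finite g).stronglyMeasurable
    ((hF.mono hm le_rfl).comp_of_finite g).integrable_of_finite

end FiniteSpace

section Control

variable {Ω E S : Type*} [AddCommGroup E]

@[simp]
theorem ctrl_self (y0 : E) (h : ℕ → Ω → E) (t0 : ℕ) (ω : Ω) : ctrl y0 h t0 t0 ω = y0 := by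
  simp [ctrl]

theorem ctrl_succ (y0 : E) (h : ℕ → Ω → E) {t0 t : ℕ} (ht : t0 ≤ t) (ω : Ω) :
    ctrl y0 h t0 (t + 1) ω = ctrl y0 h t0 t ω - h t ω := by
  simp [ctrl, sum_Ico_succ_top ht, sub_sub]

theorem ctrl_measurable [MeasurableSpace E] [MeasurableSub₂ E] [MeasurableAdd₂ E]
    {m0 : MeasurableSpace Ω} {ℱ : Filtration ℕ m0} (y0 : E) {h : ℕ → Ω → E}
    (hh : ∀ s, Measurable[ℱ s] (h s)) (t0 : ℕ) {t n : ℕ} (htn : t ≤ n + 1) :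
    Measurable[ℱ n] (ctrl y0 h t0 t) :=
  measurable_const.sub <| Finset.measurable_fun_sum _ fun s hs =>
    (hh s).mono (ℱ.mono (by have := (mem_Ico.1 hs).2; omega)) le_rfl

noncomputable def greedyCtrl (a : ℕ → E → S → E) (X : ℕ → Ω → S) (y : E) : ℕ → Ω → E
  | 0 => fun _ => y
  | s + 1 => fun ω => greedyCtrl a X y s ω - a s (greedyCtrl a X y s ω) (X s ω)

noncomputable def greedyPolicy (a : ℕ → E → S → E) (X : ℕ → Ω → S) (y : E) (s : ℕ) (ω : Ω) :
    E :=
  a s (greedyCtrl a X y s ω) (X s ω)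

theorem ctrl_greedyPolicy (a : ℕ → E → S → E) (X : ℕ → Ω → S) (y : E) (s : ℕ) (ω : Ω) :
    ctrl y (greedyPolicy a X y) 0 s ω = greedyCtrl a X y s ω := by
  induction s with
  | zero => simp [greedyCtrl]
  | succ s ih => rw [ctrl_succ _ _ s.zero_le, ih]; rfl

variable [Fintype Ω] [MeasurableSpace E] [MeasurableSingletonClass E] [MeasurableSpace S]
  [MeasurableSingletonClass S] {m0 : MeasurableSpace Ω} {ℱ : Filtration ℕ m0}

theorem greedyCtrl_measurable (a : ℕ → E → S → E) {X : ℕ → Ω → S}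
    (hX : ∀ s, Measurable[ℱ s] (X s)) (y : E) (s : ℕ) :
    Measurable[ℱ s] (greedyCtrl a X y s) := by
  induction s with
  | zero => exact measurable_const
  | succ s ih =>
    have hstate : Measurable[ℱ (s + 1)] fun ω => (greedyCtrl a X y s ω, X s ω) :=
      (ih.mono (ℱ.mono s.le_succ) le_rfl).prodMk ((hX s).mono (ℱ.mono s.le_succ) le_rfl)
    exact hstate.comp_of_finite fun p => p.1 - a s p.1 p.2

theorem greedyPolicy_admissible (μ : Measure Ω) (T : ℕ) (K : ℕ → E → S → Set E)
    (a : ℕ → E → S → E) (haK : ∀ s ≤ T, ∀ y x, a s y x ∈ K s y x) {X : ℕ → Ω → S}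
    (hX : ∀ s, Measurable[ℱ s] (X s)) (y : E) :
    Admissible μ ℱ T K X 0 y (greedyPolicy a X y) := by
  refine ⟨fun s => ?_, ae_of_all _ fun ω s _ hs => ?_⟩
  · exact ((greedyCtrl_measurable a hX y s).prodMk (hX s)).comp_of_finite fun p => a s p.1 p.2
  · rw [ctrl_greedyPolicy]
    exact haK s hs _ _

end Control

theorem Real.le_biSup_of_forall_le {ι : Type*} {S : Set ι} {f : ι → ℝ} {B : ℝ}
    (hB : ∀ i ∈ S, f i ≤ B) {i : ι} (hi : i ∈ S) : f i ≤ ⨆ j ∈ S, f j := by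
  have hbdd : BddAbove (Set.range fun j => ⨆ _ : j ∈ S, f j) :=
    ⟨max B 0, Set.forall_mem_range.2 fun j =>
      Real.iSup_le (fun hj => (hB j hj).trans (le_max_left _ _)) (le_max_right _ _)⟩
  exact (ciSup_pos (f := fun _ => f i) hi).ge.trans (le_ciSup hbdd i)

theorem exists_bellman_selector {E S : Type*} [Sub E] {T : ℕ} {H V G : ℕ → E → S → ℝ}
    {K : ℕ → E → S → Set E}
    (hatt : ∀ t', t' < T → ∀ y' x, ∃ h ∈ K t' y' x, V t' y' x = H t' h x + G t' (y' - h) x)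
    (hattT : ∀ y' x, ∃ h ∈ K T y' x, V T y' x = H T h x) :
    ∃ a : ℕ → E → S → E, (∀ s ≤ T, ∀ y x, a s y x ∈ K s y x) ∧
      (∀ s < T, ∀ y x, V s y x = H s (a s y x) x + G s (y - a s y x) x) ∧
      ∀ y x, V T y x = H T (a T y x) x := by
  choose a haK haV using hatt
  choose aT haTK haTV using hattT
  refine ⟨fun s => if hs : s < T then a s hs else aT, fun s hs y x => ?_, fun s hs y x => ?_,
    fun y x => ?_⟩
  · rcases hs.lt_or_eq with hs | rfl
    · simpa [hs] using haK s hs y x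
    · simpa using haTK y x
  · simpa [hs] using haV s hs y x
  · simpa using haTV y x

section DualEstimate

variable {Ω : Type*} {m0 : MeasurableSpace Ω} {l d : ℕ}

/-- By definition, `dualEstimate` is the `ℱ t`-conditional expectation of the supremum of
`dualPathwise` over the admissible policies. -/
noncomputable def dualPathwise (μ : Measure Ω) (ℱ : Filtration ℕ m0) (T : ℕ)
    (H V : ℕ → (Fin l → ℝ) → (Fin d → ℝ) → ℝ) (X : ℕ → Ω → (Fin d → ℝ)) (t : ℕ)
    (y : Fin l → ℝ) (π : ℕ → Ω → (Fin l → ℝ)) (ω : Ω) : ℝ :=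
  (∑ s ∈ Ico t T,
      (H s (π s ω) (X s ω) - V (s + 1) (ctrl y π t (s + 1) ω) (X (s + 1) ω)
        + condV μ ℱ V X s (ctrl y π t (s + 1) ω) ω))
    + H T (π T ω) (X T ω)

noncomputable def dualSummand (μ : Measure Ω) (ℱ : Filtration ℕ m0)
    (H V : ℕ → (Fin l → ℝ) → (Fin d → ℝ) → ℝ) (X : ℕ → Ω → (Fin d → ℝ)) (y : Fin l → ℝ)
    (π : ℕ → Ω → (Fin l → ℝ)) (s : ℕ) (ω : Ω) : ℝ :=
  H s (π s ω) (X s ω) + condV μ ℱ V X s (ctrl y π 0 (s + 1) ω) ω - V s (ctrl y π 0 s ω) (X s ω)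

noncomputable def doobIncrement (μ : Measure Ω) (ℱ : Filtration ℕ m0)
    (V : ℕ → (Fin l → ℝ) → (Fin d → ℝ) → ℝ) (X : ℕ → Ω → (Fin d → ℝ)) (y : Fin l → ℝ)
    (π : ℕ → Ω → (Fin l → ℝ)) (s : ℕ) (ω : Ω) : ℝ :=
  V (s + 1) (ctrl y π 0 (s + 1) ω) (X (s + 1) ω) - condV μ ℱ V X s (ctrl y π 0 (s + 1) ω) ω

variable {μ : Measure Ω} {ℱ : Filtration ℕ m0} {T : ℕ} {X : ℕ → Ω → (Fin d → ℝ)}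
  {H V G : ℕ → (Fin l → ℝ) → (Fin d → ℝ) → ℝ}
  {K : ℕ → (Fin l → ℝ) → (Fin d → ℝ) → Set (Fin l → ℝ)} {C : ℝ} {y : Fin l → ℝ}

theorem dualPathwise_eq_sum_dualSummand (π : ℕ → Ω → (Fin l → ℝ)) (ω : Ω) :
    dualPathwise μ ℱ T H V X 0 y π ω = ∑ s ∈ range T, dualSummand μ ℱ H V X y π s ω
      + (H T (π T ω) (X T ω) - V T (ctrl y π 0 T ω) (X T ω)) + V 0 y (X 0 ω) := by
  have htelescope := sum_range_sub (fun s => V s (ctrl y π 0 s ω) (X s ω)) T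
  rw [ctrl_self] at htelescope
  have hsummand : ∑ s ∈ range T, dualSummand μ ℱ H V X y π s ω
      = ∑ s ∈ range T, (H s (π s ω) (X s ω) - V (s + 1) (ctrl y π 0 (s + 1) ω) (X (s + 1) ω)
          + condV μ ℱ V X s (ctrl y π 0 (s + 1) ω) ω)
        + ∑ s ∈ range T, (V (s + 1) (ctrl y π 0 (s + 1) ω) (X (s + 1) ω)
          - V s (ctrl y π 0 s ω) (X s ω)) := by
    rw [← sum_add_distrib]
    exact sum_congr rfl fun s _ => by rw [dualSummand]; ring
  rw [dualPathwise, ← range_eq_Ico]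
  linarith

theorem sum_Icc_eq_dualPathwise_add_sum_doobIncrement (π : ℕ → Ω → (Fin l → ℝ)) (ω : Ω) :
    ∑ s ∈ Icc 0 T, H s (π s ω) (X s ω)
      = dualPathwise μ ℱ T H V X 0 y π ω + ∑ s ∈ range T, doobIncrement μ ℱ V X y π s ω := by
  rw [← Nat.range_succ_eq_Icc_zero, sum_range_succ, dualPathwise, ← range_eq_Ico,
    add_right_comm, ← sum_add_distrib]
  congr 1
  exact sum_congr rfl fun s _ => by rw [doobIncrement]; ring

theorem condV_eq_of_atom [Fintype Ω]
    (hG : ∀ t' (y' : Fin l → ℝ), (fun ω => G t' y' (X t' ω)) =ᵐ[μ]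
      μ[fun ω => V (t' + 1) y' (X (t' + 1) ω) | ℱ t'])
    (s : ℕ) {ω : Ω} (hω : μ {ω} ≠ 0) (z : Fin l → ℝ) :
    condV μ ℱ V X s z ω = G s z (X s ω) :=
  (ae_iff_of_countable.1 (hG s z) ω hω).symm

theorem bellman_le_of_atom [Fintype Ω]
    (hCH : ∀ s (hv : Fin l → ℝ) (x : Fin d → ℝ), |H s hv x| ≤ C)
    (hCV : ∀ s (y' : Fin l → ℝ) (x : Fin d → ℝ), |V s y' x| ≤ C)
    (hG : ∀ t' (y' : Fin l → ℝ), (fun ω => G t' y' (X t' ω)) =ᵐ[μ]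
      μ[fun ω => V (t' + 1) y' (X (t' + 1) ω) | ℱ t'])
    (hBell : ∀ t', t' < T → ∀ (y' : Fin l → ℝ) (x : Fin d → ℝ),
      V t' y' x = ⨆ h ∈ K t' y' x, (H t' h x + G t' (y' - h) x))
    {s : ℕ} (hs : s < T) {ω : Ω} (hω : μ {ω} ≠ 0) {y' h : Fin l → ℝ}
    (hK : h ∈ K s y' (X s ω)) :
    H s h (X s ω) + condV μ ℱ V X s (y' - h) ω ≤ V s y' (X s ω) := by
  have hGC : ∀ z, |G s z (X s ω)| ≤ C := fun z => by
    rw [← condV_eq_of_atom hG s hω]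
    exact ae_iff_of_countable.1 (ae_bdd_abs_condExp_of_ae_bdd_abs (ae_of_all _ fun _ => hCV ..))
      ω hω
  rw [condV_eq_of_atom hG s hω, hBell s hs]
  exact Real.le_biSup_of_forall_le
    (fun h' _ => add_le_add (abs_le.1 (hCH s h' _)).2 (abs_le.1 (hGC (y' - h'))).2) hK

theorem dualSummand_nonpos_of_atom [Fintype Ω]
    (hCH : ∀ s (hv : Fin l → ℝ) (x : Fin d → ℝ), |H s hv x| ≤ C)
    (hCV : ∀ s (y' : Fin l → ℝ) (x : Fin d → ℝ), |V s y' x| ≤ C)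
    (hG : ∀ t' (y' : Fin l → ℝ), (fun ω => G t' y' (X t' ω)) =ᵐ[μ]
      μ[fun ω => V (t' + 1) y' (X (t' + 1) ω) | ℱ t'])
    (hBell : ∀ t', t' < T → ∀ (y' : Fin l → ℝ) (x : Fin d → ℝ),
      V t' y' x = ⨆ h ∈ K t' y' x, (H t' h x + G t' (y' - h) x))
    {π : ℕ → Ω → (Fin l → ℝ)} {s : ℕ} (hs : s < T) {ω : Ω} (hω : μ {ω} ≠ 0)
    (hK : π s ω ∈ K s (ctrl y π 0 s ω) (X s ω)) :
    dualSummand μ ℱ H V X y π s ω ≤ 0 := by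
  have := bellman_le_of_atom hCH hCV hG hBell hs hω hK
  rw [← ctrl_succ _ _ s.zero_le] at this
  rw [dualSummand]
  linarith

theorem dualSummand_ae_nonpos [Fintype Ω]
    (hCH : ∀ s (hv : Fin l → ℝ) (x : Fin d → ℝ), |H s hv x| ≤ C)
    (hCV : ∀ s (y' : Fin l → ℝ) (x : Fin d → ℝ), |V s y' x| ≤ C)
    (hG : ∀ t' (y' : Fin l → ℝ), (fun ω => G t' y' (X t' ω)) =ᵐ[μ]
      μ[fun ω => V (t' + 1) y' (X (t' + 1) ω) | ℱ t'])
    (hBell : ∀ t', t' < T → ∀ (y' : Fin l → ℝ) (x : Fin d → ℝ),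
      V t' y' x = ⨆ h ∈ K t' y' x, (H t' h x + G t' (y' - h) x))
    {π : ℕ → Ω → (Fin l → ℝ)} (hπ : Admissible μ ℱ T K X 0 y π) {s : ℕ} (hs : s < T) :
    ∀ᵐ ω ∂μ, dualSummand μ ℱ H V X y π s ω ≤ 0 := by
  refine ae_iff_of_countable.2 fun ω hω => ?_
  exact dualSummand_nonpos_of_atom hCH hCV hG hBell hs hω
    (ae_iff_of_countable.1 hπ.2 ω hω s s.zero_le hs.le)

theorem dualPathwise_le_of_atom [Fintype Ω]
    (hCH : ∀ s (hv : Fin l → ℝ) (x : Fin d → ℝ), |H s hv x| ≤ C)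
    (hCV : ∀ s (y' : Fin l → ℝ) (x : Fin d → ℝ), |V s y' x| ≤ C)
    (hG : ∀ t' (y' : Fin l → ℝ), (fun ω => G t' y' (X t' ω)) =ᵐ[μ]
      μ[fun ω => V (t' + 1) y' (X (t' + 1) ω) | ℱ t'])
    (hBell : ∀ t', t' < T → ∀ (y' : Fin l → ℝ) (x : Fin d → ℝ),
      V t' y' x = ⨆ h ∈ K t' y' x, (H t' h x + G t' (y' - h) x))
    (hBellT : ∀ (y' : Fin l → ℝ) (x : Fin d → ℝ), V T y' x = ⨆ h ∈ K T y' x, H T h x)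
    {π : ℕ → Ω → (Fin l → ℝ)} (hπ : Admissible μ ℱ T K X 0 y π) {ω : Ω} (hω : μ {ω} ≠ 0) :
    dualPathwise μ ℱ T H V X 0 y π ω ≤ V 0 y (X 0 ω) := by
  have hK := ae_iff_of_countable.1 hπ.2 ω hω
  have hsummands : ∑ s ∈ range T, dualSummand μ ℱ H V X y π s ω ≤ 0 := sum_nonpos fun s hs =>
    dualSummand_nonpos_of_atom hCH hCV hG hBell (mem_range.1 hs) hω
      (hK s s.zero_le (mem_range.1 hs).le)
  have hterminal : H T (π T ω) (X T ω) ≤ V T (ctrl y π 0 T ω) (X T ω) := by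
    rw [hBellT]
    exact Real.le_biSup_of_forall_le (fun h _ => (abs_le.1 (hCH T h _)).2) (hK T T.zero_le le_rfl)
  rw [dualPathwise_eq_sum_dualSummand]
  linarith

theorem dualPathwise_greedyPolicy_of_atom [Fintype Ω]
    (hG : ∀ t' (y' : Fin l → ℝ), (fun ω => G t' y' (X t' ω)) =ᵐ[μ]
      μ[fun ω => V (t' + 1) y' (X (t' + 1) ω) | ℱ t'])
    {a : ℕ → (Fin l → ℝ) → (Fin d → ℝ) → (Fin l → ℝ)}
    (haV : ∀ s < T, ∀ y x, V s y x = H s (a s y x) x + G s (y - a s y x) x)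
    (haT : ∀ y x, V T y x = H T (a T y x) x) {ω : Ω} (hω : μ {ω} ≠ 0) :
    dualPathwise μ ℱ T H V X 0 y (greedyPolicy a X y) ω = V 0 y (X 0 ω) := by
  have hsummand : ∀ s ∈ range T, dualSummand μ ℱ H V X y (greedyPolicy a X y) s ω = 0 :=
    fun s hs => by
      rw [dualSummand, ctrl_succ _ _ s.zero_le, condV_eq_of_atom hG s hω, ctrl_greedyPolicy,
        haV s (mem_range.1 hs)]
      simp only [greedyPolicy]
      ring
  rw [dualPathwise_eq_sum_dualSummand, sum_eq_zero hsummand, ctrl_greedyPolicy, haT]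
  simp [greedyPolicy]

theorem iSup_dualPathwise_ae_eq [Fintype Ω] (hX : ∀ t', Measurable[ℱ t'] (X t'))
    (hCH : ∀ s (hv : Fin l → ℝ) (x : Fin d → ℝ), |H s hv x| ≤ C)
    (hCV : ∀ s (y' : Fin l → ℝ) (x : Fin d → ℝ), |V s y' x| ≤ C)
    (hG : ∀ t' (y' : Fin l → ℝ), (fun ω => G t' y' (X t' ω)) =ᵐ[μ]
      μ[fun ω => V (t' + 1) y' (X (t' + 1) ω) | ℱ t'])
    (hBell : ∀ t', t' < T → ∀ (y' : Fin l → ℝ) (x : Fin d → ℝ),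
      V t' y' x = ⨆ h ∈ K t' y' x, (H t' h x + G t' (y' - h) x))
    (hBellT : ∀ (y' : Fin l → ℝ) (x : Fin d → ℝ), V T y' x = ⨆ h ∈ K T y' x, H T h x)
    (hatt : ∀ t', t' < T → ∀ (y' : Fin l → ℝ) (x : Fin d → ℝ),
      ∃ h ∈ K t' y' x, V t' y' x = H t' h x + G t' (y' - h) x)
    (hattT : ∀ (y' : Fin l → ℝ) (x : Fin d → ℝ), ∃ h ∈ K T y' x, V T y' x = H T h x) :
    (fun ω => ⨆ π : {h : ℕ → Ω → (Fin l → ℝ) // Admissible μ ℱ T K X 0 y h},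
      dualPathwise μ ℱ T H V X 0 y π.1 ω) =ᵐ[μ] fun ω => V 0 y (X 0 ω) := by
  obtain ⟨a, haK, haV, haT⟩ := exists_bellman_selector hatt hattT
  have hgreedy := greedyPolicy_admissible μ T K a haK hX y
  refine ae_iff_of_countable.2 fun ω hω => ?_
  have : Nonempty {h // Admissible μ ℱ T K X 0 y h} := ⟨⟨_, hgreedy⟩⟩
  refine ciSup_eq_of_forall_le_of_forall_lt_exists_gt
    (fun π => dualPathwise_le_of_atom hCH hCV hG hBell hBellT π.2 hω) fun w hw => ?_
  exact ⟨⟨_, hgreedy⟩, (dualPathwise_greedyPolicy_of_atom hG haV haT hω).symm ▸ hw⟩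

theorem measurable_doobIncrement [Fintype Ω] (hX : ∀ t', Measurable[ℱ t'] (X t'))
    {π : ℕ → Ω → (Fin l → ℝ)} (hπ : ∀ s, Measurable[ℱ s] (π s)) (s : ℕ) :
    Measurable[ℱ (s + 1)] (doobIncrement μ ℱ V X y π s) := by
  have hctrl : Measurable[ℱ s] (ctrl y π 0 (s + 1)) := ctrl_measurable y hπ 0 le_rfl
  have hcondV : Measurable[ℱ s] fun ω => condV μ ℱ V X s (ctrl y π 0 (s + 1) ω) ω :=
    (stronglyMeasurable_comp_apply (g := condV μ ℱ V X s) hctrl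
      fun _ => stronglyMeasurable_condExp).measurable
  exact (((hctrl.mono (ℱ.mono s.le_succ) le_rfl).prodMk (hX (s + 1))).comp_of_finite
    fun p => V (s + 1) p.1 p.2).sub (hcondV.mono (ℱ.mono s.le_succ) le_rfl)

theorem condExp_doobIncrement_ae_eq_zero [Fintype Ω] [IsFiniteMeasure μ]
    (hX : ∀ t', Measurable[ℱ t'] (X t')) {π : ℕ → Ω → (Fin l → ℝ)}
    (hπ : ∀ s, Measurable[ℱ s] (π s)) (s : ℕ) :
    μ[doobIncrement μ ℱ V X y π s | ℱ s] =ᵐ[μ] 0 :=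
  condExp_comp_apply_sub_condExp_ae_eq_zero (ℱ.le s) (ctrl_measurable y hπ 0 le_rfl)
    (g := fun z ω => V (s + 1) z (X (s + 1) ω))
    fun z => ((hX (s + 1)).mono (ℱ.le _) le_rfl).comp_of_finite (V (s + 1) z)

theorem condExp_sum_doobIncrement_ae_eq_zero [Fintype Ω] [IsFiniteMeasure μ]
    (hX : ∀ t', Measurable[ℱ t'] (X t')) {π : ℕ → Ω → (Fin l → ℝ)}
    (hπ : ∀ s, Measurable[ℱ s] (π s)) :
    μ[∑ s ∈ range T, doobIncrement μ ℱ V X y π s | ℱ 0] =ᵐ[μ] 0 := by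
  have hzero : ∀ s, μ[doobIncrement μ ℱ V X y π s | ℱ 0] =ᵐ[μ] 0 := fun s =>
    calc μ[doobIncrement μ ℱ V X y π s | ℱ 0]
        =ᵐ[μ] μ[μ[doobIncrement μ ℱ V X y π s | ℱ s] | ℱ 0] :=
          (condExp_condExp_of_le (ℱ.mono s.zero_le) (ℱ.le s)).symm
      _ =ᵐ[μ] μ[0 | ℱ 0] := condExp_congr_ae (condExp_doobIncrement_ae_eq_zero hX hπ s)
      _ = 0 := condExp_zero
  refine (condExp_finsetSum (fun s _ =>
    ((measurable_doobIncrement hX hπ s).mono (ℱ.le _) le_rfl).integrable_of_finite) _).trans ?_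
  simpa using eventuallyEq_sum fun s (_ : s ∈ range T) => hzero s

theorem measurable_dualPathwise [Fintype Ω] (hX : ∀ t', Measurable[ℱ t'] (X t'))
    {π : ℕ → Ω → (Fin l → ℝ)} (hπ : ∀ s, Measurable[ℱ s] (π s)) :
    Measurable (dualPathwise μ ℱ T H V X 0 y π) := by
  have hreward : ∀ s, Measurable[ℱ s] fun ω => H s (π s ω) (X s ω) := fun s =>
    ((hπ s).prodMk (hX s)).comp_of_finite fun p => H s p.1 p.2
  refine (Finset.measurable_sum _ fun s _ => ?_).add ((hreward T).mono (ℱ.le T) le_rfl)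
  convert (((hreward s).mono (ℱ.mono s.le_succ) le_rfl).sub
    (measurable_doobIncrement hX hπ s)).mono (ℱ.le _) le_rfl using 1
  funext ω
  rw [Pi.sub_apply, doobIncrement]
  ring

theorem polValue_ae_eq_condExp_dualPathwise [Fintype Ω] [IsFiniteMeasure μ]
    (hX : ∀ t', Measurable[ℱ t'] (X t')) {π : ℕ → Ω → (Fin l → ℝ)}
    (hπ : ∀ s, Measurable[ℱ s] (π s)) :
    polValue μ ℱ T H X 0 π =ᵐ[μ] μ[dualPathwise μ ℱ T H V X 0 y π | ℱ 0] := by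
  have hdoob : Measurable (∑ s ∈ range T, doobIncrement μ ℱ V X y π s) := by
    rw [sum_fn]
    exact Finset.measurable_sum _ fun s _ =>
      (measurable_doobIncrement hX hπ s).mono (ℱ.le _) le_rfl
  have hsplit : (fun ω => ∑ s ∈ Icc 0 T, H s (π s ω) (X s ω))
      = dualPathwise μ ℱ T H V X 0 y π + ∑ s ∈ range T, doobIncrement μ ℱ V X y π s := by
    funext ω
    rw [Pi.add_apply, Finset.sum_apply, sum_Icc_eq_dualPathwise_add_sum_doobIncrement]
  rw [polValue, hsplit]
  filter_upwards [condExp_add (measurable_dualPathwise hX hπ).integrable_of_finite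
      hdoob.integrable_of_finite (ℱ 0),
    condExp_sum_doobIncrement_ae_eq_zero hX hπ] with ω hadd hzero
  rw [hadd, Pi.add_apply, hzero, Pi.zero_apply, add_zero]

theorem valueFn_ae_eq [Fintype Ω] [IsFiniteMeasure μ] (hX : ∀ t', Measurable[ℱ t'] (X t'))
    (hCH : ∀ s (hv : Fin l → ℝ) (x : Fin d → ℝ), |H s hv x| ≤ C)
    (hCV : ∀ s (y' : Fin l → ℝ) (x : Fin d → ℝ), |V s y' x| ≤ C)
    (hG : ∀ t' (y' : Fin l → ℝ), (fun ω => G t' y' (X t' ω)) =ᵐ[μ]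
      μ[fun ω => V (t' + 1) y' (X (t' + 1) ω) | ℱ t'])
    (hBell : ∀ t', t' < T → ∀ (y' : Fin l → ℝ) (x : Fin d → ℝ),
      V t' y' x = ⨆ h ∈ K t' y' x, (H t' h x + G t' (y' - h) x))
    (hBellT : ∀ (y' : Fin l → ℝ) (x : Fin d → ℝ), V T y' x = ⨆ h ∈ K T y' x, H T h x)
    (hatt : ∀ t', t' < T → ∀ (y' : Fin l → ℝ) (x : Fin d → ℝ),
      ∃ h ∈ K t' y' x, V t' y' x = H t' h x + G t' (y' - h) x)
    (hattT : ∀ (y' : Fin l → ℝ) (x : Fin d → ℝ), ∃ h ∈ K T y' x, V T y' x = H T h x) :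
    valueFn μ ℱ T H K X 0 y =ᵐ[μ] fun ω => V 0 y (X 0 ω) := by
  obtain ⟨a, haK, haV, haT⟩ := exists_bellman_selector hatt hattT
  have hgreedy := greedyPolicy_admissible μ T K a haK hX y
  have hcondExp_V0 : μ[fun ω => V 0 y (X 0 ω) | ℱ 0] = fun ω => V 0 y (X 0 ω) :=
    condExp_comp_of_measurable (ℱ.le 0) (hX 0) (V 0 y)
  have hle : ∀ π : {h // Admissible μ ℱ T K X 0 y h},
      polValue μ ℱ T H X 0 π.1 ≤ᵐ[μ] fun ω => V 0 y (X 0 ω) := fun π => by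
    have hmono := condExp_mono (m := ℱ 0) (g := fun ω => V 0 y (X 0 ω))
      (measurable_dualPathwise hX π.2.1).integrable_of_finite
      (((hX 0).mono (ℱ.le 0) le_rfl).comp_of_finite (V 0 y)).integrable_of_finite
      (ae_iff_of_countable.2 fun ω hω => dualPathwise_le_of_atom hCH hCV hG hBell hBellT π.2 hω)
    rw [hcondExp_V0] at hmono
    exact (polValue_ae_eq_condExp_dualPathwise hX π.2.1).trans_le hmono
  have heq : polValue μ ℱ T H X 0 (greedyPolicy a X y) =ᵐ[μ] fun ω => V 0 y (X 0 ω) := by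
    refine (polValue_ae_eq_condExp_dualPathwise (V := V) (y := y) hX hgreedy.1).trans ?_
    rw [← hcondExp_V0]
    exact condExp_congr_ae
      (ae_iff_of_countable.2 fun ω hω => dualPathwise_greedyPolicy_of_atom hG haV haT hω)
  refine ae_iff_of_countable.2 fun ω hω => ?_
  have : Nonempty {h // Admissible μ ℱ T K X 0 y h} := ⟨⟨_, hgreedy⟩⟩
  refine ciSup_eq_of_forall_le_of_forall_lt_exists_gt
    (fun π => ae_iff_of_countable.1 (hle π) ω hω) fun w hw => ?_
  exact ⟨⟨_, hgreedy⟩, (ae_iff_of_countable.1 heq ω hω).symm ▸ hw⟩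

end DualEstimate

theorem dual_estimate_exact_for_bellman_solution_general
    {Ω : Type*} [Fintype Ω] {m0 : MeasurableSpace Ω}
    (μ : Measure Ω) [IsProbabilityMeasure μ] (ℱ : Filtration ℕ m0)
    {l d : ℕ} (T : ℕ)
    (X : ℕ → Ω → (Fin d → ℝ)) (hX : ∀ t', Measurable[ℱ t'] (X t'))
    (H : ℕ → (Fin l → ℝ) → (Fin d → ℝ) → ℝ)
    (K : ℕ → (Fin l → ℝ) → (Fin d → ℝ) → Set (Fin l → ℝ))
    (V : ℕ → (Fin l → ℝ) → (Fin d → ℝ) → ℝ)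
    (C : ℝ) (hCH : ∀ s (hv : Fin l → ℝ) (x : Fin d → ℝ), |H s hv x| ≤ C)
    (hCV : ∀ s (y' : Fin l → ℝ) (x : Fin d → ℝ), |V s y' x| ≤ C)
    (G : ℕ → (Fin l → ℝ) → (Fin d → ℝ) → ℝ)
    -- `G_t(y', X_t) = E[V_{t+1}(y', X_{t+1}) | X_t]` (Markov conditional expectation)
    (hG : ∀ t' (y' : Fin l → ℝ), (fun ω => G t' y' (X t' ω)) =ᵐ[μ]
      μ[fun ω => V (t' + 1) y' (X (t' + 1) ω) | ℱ t'])
    -- exact Bellman equations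
    (hBell : ∀ t', t' < T → ∀ (y' : Fin l → ℝ) (x : Fin d → ℝ),
      V t' y' x = ⨆ h ∈ K t' y' x, (H t' h x + G t' (y' - h) x))
    (hBellT : ∀ (y' : Fin l → ℝ) (x : Fin d → ℝ),
      V T y' x = ⨆ h ∈ K T y' x, H T h x)
    -- attainment of the suprema
    (hatt : ∀ t', t' < T → ∀ (y' : Fin l → ℝ) (x : Fin d → ℝ),
      ∃ h ∈ K t' y' x, V t' y' x = H t' h x + G t' (y' - h) x)
    (hattT : ∀ (y' : Fin l → ℝ) (x : Fin d → ℝ), ∃ h ∈ K T y' x, V T y' x = H T h x)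
    (y : Fin l → ℝ) :
    (∀ π : ℕ → Ω → (Fin l → ℝ), Admissible μ ℱ T K X 0 y π → ∀ s, s < T →
      ∀ᵐ ω ∂μ,
        H s (π s ω) (X s ω) + condV μ ℱ V X s (ctrl y π 0 (s + 1) ω) ω
          - V s (ctrl y π 0 s ω) (X s ω) ≤ 0)
    ∧ (dualEstimate μ ℱ T H K V X 0 y =ᵐ[μ] fun ω => V 0 y (X 0 ω))
    ∧ (dualEstimate μ ℱ T H K V X 0 y =ᵐ[μ] valueFn μ ℱ T H K X 0 y) := by
  have hdual : dualEstimate μ ℱ T H K V X 0 y =ᵐ[μ] fun ω => V 0 y (X 0 ω) :=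
    calc dualEstimate μ ℱ T H K V X 0 y
        =ᵐ[μ] μ[fun ω => V 0 y (X 0 ω) | ℱ 0] :=
          condExp_congr_ae (iSup_dualPathwise_ae_eq hX hCH hCV hG hBell hBellT hatt hattT)
      _ = fun ω => V 0 y (X 0 ω) := condExp_comp_of_measurable (ℱ.le 0) (hX 0) (V 0 y)
  exact ⟨fun π hπ s hs => dualSummand_ae_nonpos hCH hCV hG hBell hπ hs, hdual,
    hdual.trans (valueFn_ae_eq hX hCH hCV hG hBell hBellT hatt hattT).symm⟩

/-- if `V` satisfies the exact dynamic programming equations then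
every summand of the dual correction is a.s. nonpositive and the dual estimate
built from `V` equals `V`, which is the value function. -/
theorem dual_estimate_exact_for_bellman_solution
    {Ω : Type*} [Fintype Ω] {m0 : MeasurableSpace Ω}
    (μ : Measure Ω) [IsProbabilityMeasure μ] (ℱ : Filtration ℕ m0)
    {l d : ℕ} (T : ℕ)
    (X : ℕ → Ω → (Fin d → ℝ)) (hX : ∀ t', Measurable[ℱ t'] (X t'))
    (H : ℕ → (Fin l → ℝ) → (Fin d → ℝ) → ℝ)
    (K : ℕ → (Fin l → ℝ) → (Fin d → ℝ) → Set (Fin l → ℝ))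
    (V : ℕ → (Fin l → ℝ) → (Fin d → ℝ) → ℝ)
    (hVmeas : ∀ t' y', Measurable (V t' y'))
    (C : ℝ) (hCH : ∀ s (hv : Fin l → ℝ) (x : Fin d → ℝ), |H s hv x| ≤ C)
    (hCV : ∀ s (y' : Fin l → ℝ) (x : Fin d → ℝ), |V s y' x| ≤ C)
    (G : ℕ → (Fin l → ℝ) → (Fin d → ℝ) → ℝ)
    -- `G_t(y', X_t) = E[V_{t+1}(y', X_{t+1}) | X_t]` (Markov conditional expectation)
    (hG : ∀ t' (y' : Fin l → ℝ), (fun ω => G t' y' (X t' ω)) =ᵐ[μ]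
      μ[fun ω => V (t' + 1) y' (X (t' + 1) ω) | ℱ t'])
    -- exact Bellman equations
    (hBell : ∀ t', t' < T → ∀ (y' : Fin l → ℝ) (x : Fin d → ℝ),
      V t' y' x = ⨆ h ∈ K t' y' x, (H t' h x + G t' (y' - h) x))
    (hBellT : ∀ (y' : Fin l → ℝ) (x : Fin d → ℝ),
      V T y' x = ⨆ h ∈ K T y' x, H T h x)
    -- attainment of the suprema
    (hatt : ∀ t', t' < T → ∀ (y' : Fin l → ℝ) (x : Fin d → ℝ),
      ∃ h ∈ K t' y' x, V t' y' x = H t' h x + G t' (y' - h) x)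
    (hattT : ∀ (y' : Fin l → ℝ) (x : Fin d → ℝ), ∃ h ∈ K T y' x, V T y' x = H T h x)
    (y : Fin l → ℝ) :
    (∀ π : ℕ → Ω → (Fin l → ℝ), Admissible μ ℱ T K X 0 y π → ∀ s, s < T →
      ∀ᵐ ω ∂μ,
        H s (π s ω) (X s ω) + condV μ ℱ V X s (ctrl y π 0 (s + 1) ω) ω
          - V s (ctrl y π 0 s ω) (X s ω) ≤ 0)
    ∧ (dualEstimate μ ℱ T H K V X 0 y =ᵐ[μ] fun ω => V 0 y (X 0 ω))
    ∧ (dualEstimate μ ℱ T H K V X 0 y =ᵐ[μ] valueFn μ ℱ T H K X 0 y) :=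
  dual_estimate_exact_for_bellman_solution_general μ ℱ T X hX H K V C hCH hCV G hG hBell hBellT hatt
    hattT y
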